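/- Let G be block-decomposable with every node of degree at most 3, and suppose some block decomposition of G contains a diamond block whose mid-edge is not annihilated. Then neither outlet of that diamond is identified with any other outlet, and the four nodes of the diamond form an entire connected component of G (isomorphic to the diamond block). -/

import Mathlib

/-- The six block shapes: spike, triangle, infork, outfork, diamond, square. -/
inductive BlockShape : Type
  | spike | triangle | infork | outfork | diamond | square
  deriving DecidableEq

namespace BlockShape

/-- Number of nodes of each block shape. -/
def numNodes : BlockShape → ℕ
  | spike => 2
  | triangle => 3
  | infork => 3
  | outfork => 3
  | diamond => 4
  | square => 5

/-- The directed edges of each block shape.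
For the spike the nodes are `x = 0, y = 1` with edge `x → y`.
For the triangle the nodes are `0, 1, 2` with edges `0 → 1 → 2 → 0`.
For the infork the nodes are `x = 0, y = 1, c = 2` with edges `x → c`, `y → c`.
For the outfork the nodes are `x = 0, y = 1, c = 2` with edges `c → x`, `c → y`.
For the diamond the nodes are `p = 0, q = 1, x = 2, y = 3` with boundary edges
`p → x, x → q, q → y, y → p` and mid-edge `q → p`.
For the square the nodes are the center `c = 0` and corners `v1 = 1, …, v4 = 4`, with
edges `v1 → v2 → v3 → v4 → v1`, `c → v1`, `v2 → c`, `c → v3`, `v4 → c`. -/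
def edges : (s : BlockShape) → List (Fin s.numNodes × Fin s.numNodes)
  | spike => ([(0, 1)] : List (Fin 2 × Fin 2))
  | triangle => ([(0, 1), (1, 2), (2, 0)] : List (Fin 3 × Fin 3))
  | infork => ([(0, 2), (1, 2)] : List (Fin 3 × Fin 3))
  | outfork => ([(2, 0), (2, 1)] : List (Fin 3 × Fin 3))
  | diamond => ([(0, 2), (2, 1), (1, 3), (3, 0), (1, 0)] : List (Fin 4 × Fin 4))
  | square => ([(1, 2), (2, 3), (3, 4), (4, 1), (0, 1), (2, 0), (0, 3), (4, 0)] :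
      List (Fin 5 × Fin 5))

/-- The outlets (white nodes) of each block shape. -/
def IsOutlet : (s : BlockShape) → Fin s.numNodes → Prop
  | spike, _ => True
  | triangle, _ => True
  | infork, i => (i : ℕ) = 2
  | outfork, i => (i : ℕ) = 2
  | diamond, i => (i : ℕ) = 0 ∨ (i : ℕ) = 1
  | square, i => (i : ℕ) = 0

/-- The degree of a node inside its block (number of incident edges). -/
def blockDeg (s : BlockShape) (i : Fin s.numNodes) : ℕ :=
  s.edges.countP fun e => decide (e.1 = i) || decide (e.2 = i)

end BlockShape

/-- A directed multigraph on a vertex type `V` is given by its edge multiplicity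
function `G : V → V → ℕ`.  It is a directed graph in our sense if it has no loops
and no 2-cycles. -/
def IsDiGraph {V : Type} (G : V → V → ℕ) : Prop :=
  (∀ v, G v v = 0) ∧ ∀ x y, G x y = 0 ∨ G y x = 0

/-- Degree of a node: the number of incident edges counted with multiplicity. -/
def degree {V : Type} [Fintype V] (G : V → V → ℕ) (v : V) : ℕ :=
  ∑ w, (G v w + G w v)

/-- Two nodes are adjacent if some edge joins them (in either direction). -/
def Adj {V : Type} (G : V → V → ℕ) (x y : V) : Prop := 0 < G x y + G y x

/-- `Reach G x y` : `y` lies in the connected component of `x`. -/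
def Reach {V : Type} (G : V → V → ℕ) : V → V → Prop := Relation.ReflTransGen (Adj G)

/-- The connected component of a node, as a finset. -/
noncomputable def component {V : Type} [Fintype V] (G : V → V → ℕ) (v : V) : Finset V :=
  letI := Classical.decPred fun w => Reach G v w
  Finset.univ.filter (Reach G v)

/-- Total number of block edges mapped onto the ordered pair `(x, y)` by the gluing data. -/
def blockMult {V : Type} [DecidableEq V] (n : ℕ) (shape : Fin n → BlockShape)
    (emb : (b : Fin n) → Fin (shape b).numNodes → V) (x y : V) : ℕ :=
  ∑ b : Fin n, (shape b).edges.countP fun e => decide (emb b e.1 = x ∧ emb b e.2 = y)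

/-- A block decomposition of the directed multigraph `G` : a finite collection of blocks
together with an identification of their nodes with the nodes of `G` such that
* each block is embedded injectively,
* nodes of two distinct blocks may be identified only if both are outlets,
* each outlet is identified with at most one other outlet (no vertex lies in three blocks),
* every vertex of `G` comes from some block, and
* the multiplicity of each edge of `G` is the number of block edges giving it minus the
  number of block edges giving the reversed edge (two parallel edges with the same
  direction are kept as a double edge; two parallel edges with opposite directions
  annihilate each other). -/
structure BlockDecomposition {V : Type} [Fintype V] [DecidableEq V] (G : V → V → ℕ) :
    Type where
  n : ℕ
  shape : Fin n → BlockShape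
  emb : (b : Fin n) → Fin (shape b).numNodes → V
  emb_inj : ∀ b, Function.Injective (emb b)
  glue_outlets : ∀ (b c : Fin n) (i : Fin (shape b).numNodes) (j : Fin (shape c).numNodes),
    emb b i = emb c j → b ≠ c → (shape b).IsOutlet i ∧ (shape c).IsOutlet j
  atMostTwo : ∀ (b c d : Fin n) (i : Fin (shape b).numNodes) (j : Fin (shape c).numNodes)
    (k : Fin (shape d).numNodes), emb b i = emb c j → emb b i = emb d k →
    b = c ∨ b = d ∨ c = d
  covers : ∀ v : V, ∃ b i, emb b i = v
  edge_eq : ∀ x y : V, G x y = blockMult n shape emb x y - blockMult n shape emb y x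

/-- The number of block edges of a decomposition lying over the ordered pair `(x, y)`. -/
def BlockDecomposition.mult {V : Type} [Fintype V] [DecidableEq V] {G : V → V → ℕ}
    (D : BlockDecomposition G) : V → V → ℕ :=
  blockMult D.n D.shape D.emb

/-- A graph is (block-)decomposable if it admits a block decomposition. -/
def Decomposable {V : Type} [Fintype V] [DecidableEq V] (G : V → V → ℕ) : Prop :=
  Nonempty (BlockDecomposition G)

/-- The edge `e` of block `b` is annihilated in the decomposition `D` : some edge of
another block lies over the same pair of vertices with the opposite direction. -/
def BlockDecomposition.EdgeAnnihilated {V : Type} [Fintype V] [DecidableEq V]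
    {G : V → V → ℕ} (D : BlockDecomposition G) (b : Fin D.n)
    (e : Fin (D.shape b).numNodes × Fin (D.shape b).numNodes) : Prop :=
  e ∈ (D.shape b).edges ∧
    ∃ (c : Fin D.n) (f : Fin (D.shape c).numNodes × Fin (D.shape c).numNodes),
      c ≠ b ∧ f ∈ (D.shape c).edges ∧ D.emb c f.1 = D.emb b e.2 ∧ D.emb c f.2 = D.emb b e.1

/-
The dead ends of the diamond lie in no other block, so every diamond edge other than the mid-edge
has an endpoint no other block reaches; together with the hypothesis on the mid-edge, no edge of
the diamond is annihilated. A vertex lies in at most two blocks, so two opposite edges over a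
diamond vertex would annihilate a diamond edge: there is no cancellation at the diamond's
vertices, and the degree of such a vertex is the sum of its degrees in the blocks containing it.
An outlet of the diamond already has degree 3 there, and every node of a block has positive
degree in it, so degree at most 3 forbids gluing the diamond to anything. A block glued to
nothing is alone responsible for all edges at its nodes, so these span a connected component
isomorphic to the block.
-/

theorem List.sum_countP_and_eq {α β : Type*} [Fintype β] [DecidableEq β] (l : List α)
    (p : α → Prop) [DecidablePred p] (g : α → β) :
    ∑ w, l.countP (fun a => decide (p a ∧ g a = w)) = l.countP (fun a => decide (p a)) := by
  induction l with
  | nil => simp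
  | cons a l ih =>
    simp only [List.countP_cons, Finset.sum_add_distrib, ih, decide_eq_true_eq]
    by_cases ha : p a <;> simp [ha]

theorem List.countP_or_le {α : Type*} (l : List α) (p q : α → Bool) :
    l.countP (fun a => p a || q a) ≤ l.countP p + l.countP q := by
  induction l with
  | nil => simp
  | cons a l ih => simp only [List.countP_cons]; split_ifs <;> simp_all <;> omega

namespace BlockShape

instance (s : BlockShape) : DecidablePred s.IsOutlet := by
  cases s <;> unfold IsOutlet <;> infer_instance

theorem swap_notMem_edges : ∀ (s : BlockShape) (e : Fin s.numNodes × Fin s.numNodes),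
    e ∈ s.edges → e.swap ∉ s.edges := by
  intro s; cases s <;> decide

theorem blockDeg_pos : ∀ (s : BlockShape) (i : Fin s.numNodes), 0 < s.blockDeg i := by
  intro s; cases s <;> decide

theorem exists_hub : ∀ s : BlockShape, ∃ r : Fin s.numNodes,
    ∀ i, i = r ∨ (r, i) ∈ s.edges ∨ (i, r) ∈ s.edges := by
  intro s; cases s <;> decide

theorem countP_edges_sub_countP_edges (s : BlockShape) (i j : Fin s.numNodes) :
    (s.edges.countP fun e => decide (e = (i, j))) - s.edges.countP (fun e => decide (e = (j, i)))
      = s.edges.countP fun e => decide (e = (i, j)) := by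
  cases s <;> revert i j <;> decide

theorem val_eq_of_eq_diamond_of_isOutlet {s : BlockShape} (hs : s = diamond)
    (e : Fin s.numNodes × Fin s.numNodes) (he : e ∈ s.edges) (h₁ : s.IsOutlet e.1)
    (h₂ : s.IsOutlet e.2) : (e.1 : ℕ) = 1 ∧ (e.2 : ℕ) = 0 := by
  subst hs; revert e; decide

theorem blockDeg_eq_three_of_eq_diamond_of_isOutlet {s : BlockShape} (hs : s = diamond)
    (i : Fin s.numNodes) (hi : s.IsOutlet i) : s.blockDeg i = 3 := by
  subst hs; revert i; decide

end BlockShape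

namespace BlockDecomposition

variable {V : Type} [Fintype V] [DecidableEq V] {G : V → V → ℕ} (D : BlockDecomposition G)

def edgeCount (c : Fin D.n) (x y : V) : ℕ :=
  (D.shape c).edges.countP fun e => decide (D.emb c e.1 = x ∧ D.emb c e.2 = y)

theorem mult_eq_sum_edgeCount (x y : V) : D.mult x y = ∑ c, D.edgeCount c x y := rfl

theorem mult_pos_iff {x y : V} : 0 < D.mult x y ↔
    ∃ c, ∃ f ∈ (D.shape c).edges, D.emb c f.1 = x ∧ D.emb c f.2 = y := by
  simp [mult_eq_sum_edgeCount, edgeCount, Finset.sum_pos_iff]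

theorem isOutlet_of_edgeAnnihilated {b : Fin D.n}
    {e : Fin (D.shape b).numNodes × Fin (D.shape b).numNodes} (h : D.EdgeAnnihilated b e) :
    (D.shape b).IsOutlet e.1 ∧ (D.shape b).IsOutlet e.2 := by
  obtain ⟨-, c, f, hcb, -, h₁, h₂⟩ := h
  exact ⟨(D.glue_outlets b c e.1 f.2 h₂.symm hcb.symm).1,
    (D.glue_outlets b c e.2 f.1 h₁.symm hcb.symm).1⟩

/- Two opposite edges over a vertex of `b` lie in at most two blocks, and not in one block since
blocks have no 2-cycles: so one of them is an edge of `b` annihilated by the other. -/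
theorem mult_eq_zero_or_mult_eq_zero {b : Fin D.n} (hb : ∀ e, ¬ D.EdgeAnnihilated b e)
    (i : Fin (D.shape b).numNodes) (w : V) :
    D.mult (D.emb b i) w = 0 ∨ D.mult w (D.emb b i) = 0 := by
  by_contra! h
  obtain ⟨c, f, hf, hf₁, hf₂⟩ := D.mult_pos_iff.1 (Nat.pos_of_ne_zero h.1)
  obtain ⟨d, g, hg, hg₁, hg₂⟩ := D.mult_pos_iff.1 (Nat.pos_of_ne_zero h.2)
  have hcd : c ≠ d := by
    rintro rfl
    have hgf : g = f.swap := Prod.ext (D.emb_inj _ (hg₁.trans hf₂.symm))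
      (D.emb_inj _ (hg₂.trans hf₁.symm))
    exact BlockShape.swap_notMem_edges _ f hf (hgf ▸ hg)
  rcases D.atMostTwo b c d i f.1 g.2 hf₁.symm hg₂.symm with rfl | rfl | hcd'
  · exact hb f ⟨hf, d, g, hcd.symm, hg, hg₁.trans hf₂.symm, hg₂.trans hf₁.symm⟩
  · exact hb g ⟨hg, c, f, hcd, hf, hf₁.trans hg₂.symm, hf₂.trans hg₁.symm⟩
  · exact hcd hcd'

theorem apply_le_mult (x y : V) : G x y ≤ D.mult x y :=
  (D.edge_eq x y).trans_le (Nat.sub_le _ _)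

theorem degree_eq_sum_mult {v : V} (hv : ∀ w, D.mult v w = 0 ∨ D.mult w v = 0) :
    degree G v = ∑ w, (D.mult v w + D.mult w v) := by
  refine Finset.sum_congr rfl fun w _ => ?_
  rw [D.edge_eq, D.edge_eq]
  change D.mult v w - D.mult w v + (D.mult w v - D.mult v w) = D.mult v w + D.mult w v
  rcases hv w with h | h <;> omega

theorem blockDeg_le_sum_edgeCount {c : Fin D.n} {k : Fin (D.shape c).numNodes} {v : V}
    (hk : D.emb c k = v) :
    (D.shape c).blockDeg k ≤ ∑ w, (D.edgeCount c v w + D.edgeCount c w v) := by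
  have hiff : ∀ i, D.emb c i = v ↔ i = k := fun i => hk ▸ (D.emb_inj c).eq_iff
  have hout : ∑ w, D.edgeCount c v w = (D.shape c).edges.countP fun e => decide (e.1 = k) := by
    simp only [edgeCount, List.sum_countP_and_eq, hiff]
  have hin : ∑ w, D.edgeCount c w v = (D.shape c).edges.countP fun e => decide (e.2 = k) := by
    simp only [edgeCount, and_comm (a := D.emb c _ = _), List.sum_countP_and_eq, hiff]
  rw [Finset.sum_add_distrib, hout, hin]
  exact List.countP_or_le _ _ _

theorem blockDeg_add_blockDeg_le_sum_mult {b c : Fin D.n} (hbc : b ≠ c)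
    {i : Fin (D.shape b).numNodes} {k : Fin (D.shape c).numNodes} {v : V}
    (hi : D.emb b i = v) (hk : D.emb c k = v) :
    (D.shape b).blockDeg i + (D.shape c).blockDeg k ≤ ∑ w, (D.mult v w + D.mult w v) := by
  calc (D.shape b).blockDeg i + (D.shape c).blockDeg k
      ≤ ∑ d ∈ {b, c}, ∑ w, (D.edgeCount d v w + D.edgeCount d w v) := by
        rw [Finset.sum_pair hbc]
        exact add_le_add (D.blockDeg_le_sum_edgeCount hi) (D.blockDeg_le_sum_edgeCount hk)
    _ ≤ ∑ d, ∑ w, (D.edgeCount d v w + D.edgeCount d w v) :=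
        Finset.sum_le_sum_of_subset (Finset.subset_univ _)
    _ = ∑ w, (D.mult v w + D.mult w v) := by
        simp only [Finset.sum_comm (γ := Fin D.n), mult_eq_sum_edgeCount, Finset.sum_add_distrib]

theorem blockDeg_add_blockDeg_le_degree {b c : Fin D.n} (hb : ∀ e, ¬ D.EdgeAnnihilated b e)
    (hbc : b ≠ c) {i : Fin (D.shape b).numNodes} {k : Fin (D.shape c).numNodes}
    (hk : D.emb c k = D.emb b i) :
    (D.shape b).blockDeg i + (D.shape c).blockDeg k ≤ degree G (D.emb b i) := by
  rw [D.degree_eq_sum_mult (D.mult_eq_zero_or_mult_eq_zero hb i)]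
  exact D.blockDeg_add_blockDeg_le_sum_mult hbc rfl hk

def IsIsolated (b : Fin D.n) : Prop :=
  ∀ (i : Fin (D.shape b).numNodes) (c : Fin D.n) (k : Fin (D.shape c).numNodes),
    D.emb c k = D.emb b i → c = b

namespace IsIsolated

variable {D} {b : Fin D.n}

theorem mult_emb_left (hb : D.IsIsolated b) (i : Fin (D.shape b).numNodes) (y : V) :
    D.mult (D.emb b i) y =
      (D.shape b).edges.countP fun e => decide (e.1 = i ∧ D.emb b e.2 = y) := by
  rw [mult_eq_sum_edgeCount, Finset.sum_eq_single b]
  · simp only [edgeCount, (D.emb_inj b).eq_iff]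
  · intro c _ hcb
    simp only [edgeCount, List.countP_eq_zero, decide_eq_true_eq, not_and]
    exact fun f _ hf => absurd (hb i c f.1 hf) hcb
  · exact fun h => absurd (Finset.mem_univ b) h

theorem mult_emb_right (hb : D.IsIsolated b) (i : Fin (D.shape b).numNodes) (x : V) :
    D.mult x (D.emb b i) =
      (D.shape b).edges.countP fun e => decide (D.emb b e.1 = x ∧ e.2 = i) := by
  rw [mult_eq_sum_edgeCount, Finset.sum_eq_single b]
  · simp only [edgeCount, (D.emb_inj b).eq_iff]
  · intro c _ hcb
    simp only [edgeCount, List.countP_eq_zero, decide_eq_true_eq]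
    exact fun f _ hf => absurd (hb i c f.2 hf.2) hcb
  · exact fun h => absurd (Finset.mem_univ b) h

theorem apply_emb_emb (hb : D.IsIsolated b) (i j : Fin (D.shape b).numNodes) :
    G (D.emb b i) (D.emb b j) = (D.shape b).edges.countP fun e => decide (e = (i, j)) := by
  have hmult : ∀ i j, D.mult (D.emb b i) (D.emb b j) =
      (D.shape b).edges.countP fun e => decide (e = (i, j)) := fun i j => by
    simp only [hb.mult_emb_left, (D.emb_inj b).eq_iff, Prod.ext_iff]
  rw [D.edge_eq]
  change D.mult _ _ - D.mult _ _ = _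
  rw [hmult, hmult, BlockShape.countP_edges_sub_countP_edges]

theorem exists_emb_eq_of_adj (hb : D.IsIsolated b) {i : Fin (D.shape b).numNodes} {x : V}
    (h : Adj G (D.emb b i) x) : ∃ j, D.emb b j = x := by
  by_contra! hx
  have hout : D.mult (D.emb b i) x = 0 := by
    rw [hb.mult_emb_left, List.countP_eq_zero]
    simp only [decide_eq_true_eq, not_and]
    exact fun e _ _ => hx e.2
  have hin : D.mult x (D.emb b i) = 0 := by
    rw [hb.mult_emb_right, List.countP_eq_zero]
    simp only [decide_eq_true_eq, not_and]
    exact fun e _ he => absurd he (hx e.1)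
  have := D.apply_le_mult (D.emb b i) x
  have := D.apply_le_mult x (D.emb b i)
  unfold Adj at h
  omega

theorem exists_emb_eq_of_reach (hb : D.IsIsolated b) {i : Fin (D.shape b).numNodes} {x : V}
    (h : Reach G (D.emb b i) x) : ∃ j, D.emb b j = x := by
  induction h with
  | refl => exact ⟨i, rfl⟩
  | tail _ hxy ih =>
    obtain ⟨j, rfl⟩ := ih
    exact hb.exists_emb_eq_of_adj hxy

theorem adj_emb_emb (hb : D.IsIsolated b) {i j : Fin (D.shape b).numNodes}
    (h : (i, j) ∈ (D.shape b).edges ∨ (j, i) ∈ (D.shape b).edges) :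
    Adj G (D.emb b i) (D.emb b j) := by
  unfold Adj
  rw [hb.apply_emb_emb, hb.apply_emb_emb]
  rcases h with h | h
  · exact Nat.add_pos_left (List.countP_pos_iff.2 ⟨_, h, decide_eq_true rfl⟩) _
  · exact Nat.add_pos_right _ (List.countP_pos_iff.2 ⟨_, h, decide_eq_true rfl⟩)

theorem reach_emb_emb (hb : D.IsIsolated b) (i j : Fin (D.shape b).numNodes) :
    Reach G (D.emb b i) (D.emb b j) := by
  obtain ⟨r, hr⟩ := (D.shape b).exists_hub
  have reach_hub : ∀ i,
      Reach G (D.emb b i) (D.emb b r) ∧ Reach G (D.emb b r) (D.emb b i) := by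
    intro i
    rcases hr i with rfl | h
    · exact ⟨.refl, .refl⟩
    · exact ⟨.single (hb.adj_emb_emb h.symm), .single (hb.adj_emb_emb h)⟩
  exact (reach_hub i).1.trans (reach_hub j).2

end IsIsolated

end BlockDecomposition

theorem stmt_17_general {V : Type} [Fintype V] [DecidableEq V] (G : V → V → ℕ)
    (hdeg : ∀ v, degree G v ≤ 3)
    (D : BlockDecomposition G) (b : Fin D.n)
    (hb : D.shape b = BlockShape.diamond)
    (hmid : ∀ e : Fin (D.shape b).numNodes × Fin (D.shape b).numNodes,
      (e.1 : ℕ) = 1 → (e.2 : ℕ) = 0 → ¬ D.EdgeAnnihilated b e) :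
    (∀ i : Fin (D.shape b).numNodes, (D.shape b).IsOutlet i →
      ∀ (c : Fin D.n) (k : Fin (D.shape c).numNodes), D.emb c k = D.emb b i → c = b) ∧
    (∀ i j : Fin (D.shape b).numNodes, Reach G (D.emb b i) (D.emb b j)) ∧
    (∀ (i : Fin (D.shape b).numNodes) (x : V),
      Reach G (D.emb b i) x → ∃ j, D.emb b j = x) ∧
    (∀ i j : Fin (D.shape b).numNodes,
      G (D.emb b i) (D.emb b j) = (D.shape b).edges.countP fun e => decide (e = (i, j))) := by
  have hann : ∀ e, ¬ D.EdgeAnnihilated b e := fun e he =>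
    have ⟨h₁, h₂⟩ := D.isOutlet_of_edgeAnnihilated he
    have ⟨hq, hp⟩ := BlockShape.val_eq_of_eq_diamond_of_isOutlet hb e he.1 h₁ h₂
    hmid e hq hp he
  have hiso : D.IsIsolated b := by
    intro i c k hk
    by_contra hcb
    have hi : (D.shape b).IsOutlet i := (D.glue_outlets b c i k hk.symm (Ne.symm hcb)).1
    have hdeg_le := D.blockDeg_add_blockDeg_le_degree hann (Ne.symm hcb) hk
    rw [BlockShape.blockDeg_eq_three_of_eq_diamond_of_isOutlet hb i hi] at hdeg_le
    have := (D.shape c).blockDeg_pos k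
    have := hdeg (D.emb b i)
    omega
  exact ⟨fun i _ => hiso i, hiso.reach_emb_emb, fun _ _ => hiso.exists_emb_eq_of_reach,
    hiso.apply_emb_emb⟩

/-- if every node of a block-decomposable graph has degree at most 3 and
some block decomposition contains a diamond block whose mid-edge is not annihilated,
then no node of that diamond is identified with a node of another block, and the four
nodes of the diamond form an entire connected component of `G`, isomorphic to the
diamond block. -/
theorem stmt_17 {V : Type} [Fintype V] [DecidableEq V] (G : V → V → ℕ)
    (hG : IsDiGraph G) (hdeg : ∀ v, degree G v ≤ 3)
    (D : BlockDecomposition G) (b : Fin D.n)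
    (hb : D.shape b = BlockShape.diamond)
    (hmid : ∀ e : Fin (D.shape b).numNodes × Fin (D.shape b).numNodes,
      (e.1 : ℕ) = 1 → (e.2 : ℕ) = 0 → ¬ D.EdgeAnnihilated b e) :
    (∀ i : Fin (D.shape b).numNodes, (D.shape b).IsOutlet i →
      ∀ (c : Fin D.n) (k : Fin (D.shape c).numNodes), D.emb c k = D.emb b i → c = b) ∧
    (∀ i j : Fin (D.shape b).numNodes, Reach G (D.emb b i) (D.emb b j)) ∧
    (∀ (i : Fin (D.shape b).numNodes) (x : V),
      Reach G (D.emb b i) x → ∃ j, D.emb b j = x) ∧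
    (∀ i j : Fin (D.shape b).numNodes,
      G (D.emb b i) (D.emb b j) = (D.shape b).edges.countP fun e => decide (e = (i, j))) :=
  stmt_17_general G hdeg D b hb hmid
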